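/- arXiv:math-ph/0611001 — 8 statements merged into one kernel-verified Lean document; each statement's English description precedes it below -/
import Mathlib

section
/- Let M be a real symmetric 2×2 matrix, let S be a real orthogonal 2×2 matrix and λ₁, λ₂ real numbers with M = S · diag(λ₁, λ₂) · S⁻¹, and let E > max(λ₁, λ₂). Set rᵢ := √(E − λᵢ) for i = 1, 2. Then the matrix exponential of the 4×4 block matrix ((0, I₂),(M − E·I₂, 0)) equals (S ⊕ S) · P · (S ⊕ S)⁻¹, where S ⊕ S is the 4×4 block-diagonal matrix diag(S, S) and P is the 4×4 matrix whose nonzero entries are (1,1) = cos r₁, (2,2) = cos r₂, (1,3) = sin r₁ / r₁, (2,4) = sin r₂ / r₂, (3,1) = −r₁ sin r₁, (4,2) = −r₂ sin r₂, (3,3) = cos r₁, (4,4) = cos r₂. (This is the explicit transfer-matrix formula (16) underlying both models.) -/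
open Matrix Real

noncomputable section

lemma exp_reindex_aux {m n : Type*} [Fintype m] [DecidableEq m] [Fintype n] [DecidableEq n]
    (e : m ≃ n) (A : Matrix m m ℝ) :
    NormedSpace.exp (Matrix.reindex e e A) = Matrix.reindex e e (NormedSpace.exp A) := by
  letI : SeminormedRing (Matrix m m ℝ) := Matrix.linftyOpSemiNormedRing
  letI : NormedRing (Matrix m m ℝ) := Matrix.linftyOpNormedRing
  letI : NormedAlgebra ℝ (Matrix m m ℝ) := Matrix.linftyOpNormedAlgebra
  letI : NormedAlgebra ℚ (Matrix m m ℝ) := NormedAlgebra.restrictScalars ℚ ℝ _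
  letI : SeminormedRing (Matrix n n ℝ) := Matrix.linftyOpSemiNormedRing
  letI : NormedRing (Matrix n n ℝ) := Matrix.linftyOpNormedRing
  letI : NormedAlgebra ℝ (Matrix n n ℝ) := Matrix.linftyOpNormedAlgebra
  letI : NormedAlgebra ℚ (Matrix n n ℝ) := NormedAlgebra.restrictScalars ℚ ℝ _
  have hcont : Continuous (Matrix.reindexAlgEquiv ℝ ℝ e) := by
    show Continuous fun M : Matrix m m ℝ => Matrix.reindex e e M
    refine continuous_pi fun i => continuous_pi fun j => ?_
    simp only [Matrix.reindex_apply, Matrix.submatrix_apply]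
    exact (continuous_apply _).comp (continuous_apply _)
  exact (NormedSpace.map_exp (Matrix.reindexAlgEquiv ℝ ℝ e) hcont A).symm

lemma pi_exp_apply {ι : Type*} [Fintype ι] {n : Type*} [Fintype n] [DecidableEq n]
    (v : ι → Matrix n n ℝ) (i : ι) :
    NormedSpace.exp v i = NormedSpace.exp (v i) := by
  letI : SeminormedRing (Matrix n n ℝ) := Matrix.linftyOpSemiNormedRing
  letI : NormedRing (Matrix n n ℝ) := Matrix.linftyOpNormedRing
  letI : NormedAlgebra ℝ (Matrix n n ℝ) := Matrix.linftyOpNormedAlgebra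
  letI : NormedAlgebra ℚ (Matrix n n ℝ) := NormedAlgebra.restrictScalars ℚ ℝ _
  exact Pi.coe_exp v i

def prodSumEquiv : Fin 2 × Fin 2 ≃ Fin 2 ⊕ Fin 2 where
  toFun p := if p.1 = 0 then Sum.inl p.2 else Sum.inr p.2
  invFun s := Sum.elim (fun i => (0, i)) (fun i => (1, i)) s
  left_inv := by decide
  right_inv := by decide

lemma exp_sq_eq {n : Type*} [Fintype n] [DecidableEq n] (A : Matrix n n ℝ) (ω : ℝ)
    (hω : ω ≠ 0) (h : A * A = (-(ω ^ 2)) • 1) :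
    NormedSpace.exp A = Real.cos ω • (1 : Matrix n n ℝ) + (Real.sin ω / ω) • A := by
  rw [NormedSpace.exp_eq_tsum ℝ]
  refine HasSum.tsum_eq ?_
  have heven : ∀ k : ℕ, A ^ (2 * k) = ((-1 : ℝ) ^ k * ω ^ (2 * k)) • (1 : Matrix n n ℝ) := by
    intro k
    rw [pow_mul, sq, h, smul_pow, one_pow]
    congr 1
    rw [neg_pow, pow_mul]
  have hodd : ∀ k : ℕ, A ^ (2 * k + 1) = ((-1 : ℝ) ^ k * ω ^ (2 * k)) • A := by
    intro k
    rw [pow_succ, heven, smul_mul_assoc, one_mul]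
  refine HasSum.even_add_odd ?_ ?_
  · have := (Real.hasSum_cos ω).smul_const (1 : Matrix n n ℝ)
    convert this using 2 with k
    · rfl
    rw [heven, smul_smul]
    congr 1
    rw [div_eq_mul_inv]
    ring
  · have := ((Real.hasSum_sin ω).div_const ω).smul_const A
    convert this using 2 with k
    · rfl
    rw [hodd, smul_smul]
    congr 1
    field_simp
    ring

lemma exp_two (ω : ℝ) (hω : 0 < ω) :
    NormedSpace.exp !![0, 1; -(ω ^ 2), 0] =
      !![Real.cos ω, Real.sin ω / ω; -(ω * Real.sin ω), Real.cos ω] := by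
  rw [exp_sq_eq _ ω hω.ne' (by
    ext i j
    fin_cases i <;> fin_cases j <;>
      simp [Matrix.mul_apply, Fin.sum_univ_two, Matrix.one_apply])]
  ext i j
  fin_cases i <;> fin_cases j <;>
    simp [Matrix.one_apply]
  field_simp

theorem explicit_transfer_matrix_formula (M S : Matrix (Fin 2) (Fin 2) ℝ)
    (hM : Mᵀ = M) (hS : Sᵀ * S = 1) (l1 l2 E : ℝ)
    (hdiag : M = S * Matrix.diagonal ![l1, l2] * S⁻¹) (hE : max l1 l2 < E) :
    NormedSpace.exp (Matrix.fromBlocks 0 1 (M - E • 1) 0) =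
      Matrix.fromBlocks S 0 0 S *
        Matrix.fromBlocks
          (Matrix.diagonal ![Real.cos (Real.sqrt (E - l1)), Real.cos (Real.sqrt (E - l2))])
          (Matrix.diagonal ![Real.sin (Real.sqrt (E - l1)) / Real.sqrt (E - l1),
            Real.sin (Real.sqrt (E - l2)) / Real.sqrt (E - l2)])
          (Matrix.diagonal ![-(Real.sqrt (E - l1) * Real.sin (Real.sqrt (E - l1))),
            -(Real.sqrt (E - l2) * Real.sin (Real.sqrt (E - l2)))])
          (Matrix.diagonal ![Real.cos (Real.sqrt (E - l1)), Real.cos (Real.sqrt (E - l2))]) *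
        (Matrix.fromBlocks S 0 0 S)⁻¹ := by
  rw [max_lt_iff] at hE
  have h1 : (0:ℝ) < E - l1 := by linarith [hE.1]
  have h2 : (0:ℝ) < E - l2 := by linarith [hE.2]
  set ω1 := Real.sqrt (E - l1) with hω1def
  set ω2 := Real.sqrt (E - l2) with hω2def
  have hω1 : 0 < ω1 := Real.sqrt_pos.mpr h1
  have hω2 : 0 < ω2 := Real.sqrt_pos.mpr h2
  have hs1 : ω1 ^ 2 = E - l1 := Real.sq_sqrt h1.le
  have hs2 : ω2 ^ 2 = E - l2 := Real.sq_sqrt h2.le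
  have hSinv : S⁻¹ = Sᵀ := Matrix.inv_eq_left_inv hS
  have hSS : S * S⁻¹ = 1 := by rw [hSinv]; exact mul_eq_one_comm.mp hS
  set U := Matrix.fromBlocks S 0 0 S with hUdef
  have hUU : U * Matrix.fromBlocks S⁻¹ 0 0 S⁻¹ = 1 := by
    rw [hUdef, Matrix.fromBlocks_multiply]
    simp [hSS, Matrix.fromBlocks_one]
  have hUinv : U⁻¹ = Matrix.fromBlocks S⁻¹ 0 0 S⁻¹ := Matrix.inv_eq_right_inv hUU
  have hU : IsUnit U := by
    have := invertibleOfRightInverse _ _ hUU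
    exact isUnit_of_invertible U
  set d : Fin 2 → ℝ := ![-(ω1 ^ 2), -(ω2 ^ 2)] with hddef
  set N : Matrix (Fin 2 ⊕ Fin 2) (Fin 2 ⊕ Fin 2) ℝ := Matrix.fromBlocks 0 1 (Matrix.diagonal d) 0 with hNdef
  have hME : M - E • 1 = S * Matrix.diagonal d * S⁻¹ := by
    have hd : Matrix.diagonal d = Matrix.diagonal ![l1, l2] - E • 1 := by
      ext i j
      fin_cases i <;> fin_cases j <;>
        simp [hddef, hs1, hs2, Matrix.one_apply, Matrix.diagonal_apply] <;> ring
    have hsm : S * (E • (1 : Matrix (Fin 2) (Fin 2) ℝ)) * S⁻¹ = E • 1 := by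
      rw [mul_smul_comm, mul_one, smul_mul_assoc, hSS]
    rw [hdiag, hd, Matrix.mul_sub, Matrix.sub_mul, hsm]
  have hconj : Matrix.fromBlocks 0 1 (M - E • 1) 0 = U * N * U⁻¹ := by
    rw [hUinv, hME, hUdef, hNdef]
    simp [Matrix.fromBlocks_multiply, hSS, Matrix.mul_assoc]
  rw [hconj, Matrix.exp_conj U N hU]
  congr 2
  -- exp N = P
  set v : Fin 2 → Matrix (Fin 2) (Fin 2) ℝ :=
    ![!![0, 1; -(ω1 ^ 2), 0], !![0, 1; -(ω2 ^ 2), 0]] with hvdef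
  have hN : N = Matrix.reindex prodSumEquiv prodSumEquiv (Matrix.blockDiagonal v) := by
    ext i j
    rcases i with i | i <;> rcases j with j | j <;> fin_cases i <;> fin_cases j <;>
      simp [hNdef, prodSumEquiv, hvdef, Matrix.blockDiagonal_apply, Matrix.one_apply, hddef]
  rw [hN, exp_reindex_aux, Matrix.exp_blockDiagonal]
  have hv1 : NormedSpace.exp v 0 =
      !![Real.cos ω1, Real.sin ω1 / ω1; -(ω1 * Real.sin ω1), Real.cos ω1] := by
    rw [pi_exp_apply]
    simpa [hvdef] using exp_two ω1 hω1
  have hv2 : NormedSpace.exp v 1 =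
      !![Real.cos ω2, Real.sin ω2 / ω2; -(ω2 * Real.sin ω2), Real.cos ω2] := by
    rw [pi_exp_apply]
    simpa [hvdef] using exp_two ω2 hω2
  ext i j
  rcases i with i | i <;> rcases j with j | j <;> fin_cases i <;> fin_cases j <;>
    simp [prodSumEquiv, Matrix.blockDiagonal_apply, hv1, hv2, Matrix.diagonal_apply]
end
end

section
/- Let −1 < E < 1 and set α := √(1 − E), β := √(1 + E), and U := (1/√2)·((1,1),(1,−1)). Then exp(K(E)) = (U ⊕ U) · R̃_{α,β} · (U ⊕ U), where U ⊕ U = diag(U, U) as a 4×4 block-diagonal matrix and R̃_{α,β} is the 4×4 matrix whose nonzero entries are (1,1) = cosh α, (2,2) = cos β, (1,3) = sinh α / α, (2,4) = sin β / β, (3,1) = α sinh α, (4,2) = −β sin β, (3,3) = cosh α, (4,4) = cos β. (Note U is orthogonal and symmetric, so (U ⊕ U)⁻¹ = U ⊕ U.) -/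
open Matrix Real

noncomputable section

/-- `K(E)`. -/
def K (E : ℝ) : Matrix (Fin 4) (Fin 4) ℝ :=
  !![0,0,1,0; 0,0,0,1; -E,1,0,0; 1,-E,0,0]

/-- `U ⊕ U` where `U = (1/√2)·((1,1),(1,−1))`. -/
def U4 : Matrix (Fin 4) (Fin 4) ℝ :=
  (1 / Real.sqrt 2) • !![1,1,0,0; 1,-1,0,0; 0,0,1,1; 0,0,1,-1]

set_option maxHeartbeats 1600000 in
lemma exp_mid (a b : ℝ) (ha : 0 < a) (hb : 0 < b) :
    NormedSpace.exp (!![0,0,1,0; 0,0,0,1; a^2,0,0,0; 0,-b^2,0,0] : Matrix (Fin 4) (Fin 4) ℝ) =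
    !![Real.cosh a, 0, Real.sinh a / a, 0;
       0, Real.cos b, 0, Real.sin b / b;
       a * Real.sinh a, 0, Real.cosh a, 0;
       0, -(b * Real.sin b), 0, Real.cos b] := by
  letI : NormedRing (Matrix (Fin 4) (Fin 4) ℝ) := Matrix.linftyOpNormedRing
  letI : NormedAlgebra ℝ (Matrix (Fin 4) (Fin 4) ℝ) := Matrix.linftyOpNormedAlgebra
  letI : NormedRing (Matrix (Fin 4) (Fin 4) ℂ) := Matrix.linftyOpNormedRing
  letI : NormedAlgebra ℝ (Matrix (Fin 4) (Fin 4) ℂ) := Matrix.linftyOpNormedAlgebra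
  letI : NormedAlgebra ℂ (Matrix (Fin 4) (Fin 4) ℂ) := Matrix.linftyOpNormedAlgebra
  letI : NormedAlgebra ℚ (Matrix (Fin 4) (Fin 4) ℝ) := Matrix.linftyOpNormedAlgebra
  have ha' : (a : ℂ) ≠ 0 := by exact_mod_cast ha.ne'
  have hb' : (b : ℂ) ≠ 0 := by exact_mod_cast hb.ne'
  set f : Matrix (Fin 4) (Fin 4) ℝ →+* Matrix (Fin 4) (Fin 4) ℂ :=
    (Complex.ofRealHom : ℝ →+* ℂ).mapMatrix with hfdef
  have hf : Continuous f := continuous_id.matrix_map Complex.continuous_ofReal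
  have hinj : Function.Injective f := fun A B h => by
    ext i j
    exact Complex.ofReal_injective (congrFun (congrFun (congrArg Matrix.of.symm h) i) j)
  apply hinj
  refine (NormedSpace.map_exp f hf _).trans ?_
  have hfM : f (!![0,0,1,0; 0,0,0,1; a^2,0,0,0; 0,-b^2,0,0] : Matrix (Fin 4) (Fin 4) ℝ) =
      !![0,0,1,0; 0,0,0,1; (a:ℂ)^2,0,0,0; 0,-(b:ℂ)^2,0,0] := by
    ext i j
    fin_cases i <;> fin_cases j <;>
      simp [hfdef, RingHom.mapMatrix_apply, Matrix.map_apply, Matrix.vecHead, Matrix.vecTail]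
  rw [hfM]
  set P : Matrix (Fin 4) (Fin 4) ℂ :=
    !![1,1,0,0; 0,0,1,1; (a:ℂ),-(a:ℂ),0,0; 0,0,Complex.I*b,-(Complex.I*b)] with hP
  set Q : Matrix (Fin 4) (Fin 4) ℂ :=
    !![1/2,0,1/(2*a),0; 1/2,0,-(1/(2*a)),0;
       0,1/2,0,1/(2*(Complex.I*b)); 0,1/2,0,-(1/(2*(Complex.I*b)))] with hQ
  have hIb : Complex.I * b ≠ 0 := mul_ne_zero Complex.I_ne_zero hb'
  have hPQ : P * Q = 1 := by
    ext i j
    fin_cases i <;> fin_cases j <;>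
      simp [hP, hQ, Matrix.mul_apply, Fin.sum_univ_four, Matrix.one_apply,
        Matrix.vecHead, Matrix.vecTail]
    all_goals try field_simp
    all_goals try ring
    all_goals try (ring_nf; simp [Complex.I_sq]; try ring)
    all_goals norm_num [Complex.I_sq]
  have hQP : Q * P = 1 := by
    ext i j
    fin_cases i <;> fin_cases j <;>
      simp [hP, hQ, Matrix.mul_apply, Fin.sum_univ_four, Matrix.one_apply,
        Matrix.vecHead, Matrix.vecTail]
    all_goals try field_simp
    all_goals try ring
    all_goals try (ring_nf; simp [Complex.I_sq]; try ring)
    all_goals norm_num [Complex.I_sq]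
  set u : (Matrix (Fin 4) (Fin 4) ℂ)ˣ := ⟨P, Q, hPQ, hQP⟩ with hu
  set D : Matrix (Fin 4) (Fin 4) ℂ :=
    Matrix.diagonal ![(a:ℂ), -a, Complex.I*b, -(Complex.I*b)] with hD
  have hdecomp : (!![0,0,1,0; 0,0,0,1; (a:ℂ)^2,0,0,0; 0,-(b:ℂ)^2,0,0] :
      Matrix (Fin 4) (Fin 4) ℂ) = (↑u : Matrix (Fin 4) (Fin 4) ℂ) * D * (↑u⁻¹ : Matrix (Fin 4) (Fin 4) ℂ) := by
    show _ = P * D * Q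
    ext i j
    fin_cases i <;> fin_cases j <;>
      simp [hP, hQ, hD, Matrix.mul_apply, Fin.sum_univ_four, Matrix.diagonal,
        Matrix.vecHead, Matrix.vecTail]
    all_goals try simp (config := { decide := true }) only [if_true, if_false, reduceIte]
    all_goals try simp
    all_goals try field_simp
    all_goals try ring
    all_goals try (ring_nf; simp [Complex.I_sq]; try ring)
    all_goals norm_num [Complex.I_sq]
  rw [hdecomp]
  letI : NormedAlgebra ℚ (Matrix (Fin 4) (Fin 4) ℂ) := Matrix.linftyOpNormedAlgebra
  refine (NormedSpace.exp_units_conj u D).trans ?_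
  show P * NormedSpace.exp D * Q = _
  rw [hD, Matrix.exp_diagonal, Pi.exp_def, ← Complex.exp_eq_exp_ℂ]
  ext i j
  fin_cases i <;> fin_cases j <;>
    simp [hP, hQ, hfdef, RingHom.mapMatrix_apply, Matrix.mul_apply, Fin.sum_univ_four,
      Matrix.diagonal, Matrix.map_apply, Matrix.vecHead, Matrix.vecTail]
  all_goals try simp (config := { decide := true }) only [if_true, if_false, reduceIte]
  all_goals try push_cast []
  all_goals try simp only [Complex.cosh, Complex.sinh, Complex.cos, Complex.sin]
  all_goals try field_simp
  all_goals try ring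
  all_goals try (ring_nf; simp [Complex.I_sq]; try ring)
  all_goals (rw [Complex.I_sq]; ring)

set_option maxHeartbeats 1600000 in
theorem exp_K_middle_band (E : ℝ) (hE1 : -1 < E) (hE2 : E < 1) :
    NormedSpace.exp (K E) =
      U4 *
        !![Real.cosh (Real.sqrt (1 - E)), 0,
             Real.sinh (Real.sqrt (1 - E)) / Real.sqrt (1 - E), 0;
           0, Real.cos (Real.sqrt (1 + E)), 0,
             Real.sin (Real.sqrt (1 + E)) / Real.sqrt (1 + E);
           Real.sqrt (1 - E) * Real.sinh (Real.sqrt (1 - E)), 0,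
             Real.cosh (Real.sqrt (1 - E)), 0;
           0, -(Real.sqrt (1 + E) * Real.sin (Real.sqrt (1 + E))), 0,
             Real.cos (Real.sqrt (1 + E))] *
      U4 := by
  have h2 : Real.sqrt 2 * Real.sqrt 2 = 2 := Real.mul_self_sqrt (by norm_num)
  have h2' : Real.sqrt 2 ≠ 0 := by positivity
  have hα : 0 < Real.sqrt (1 - E) := Real.sqrt_pos.mpr (by linarith)
  have hβ : 0 < Real.sqrt (1 + E) := Real.sqrt_pos.mpr (by linarith)
  have hα2 : Real.sqrt (1 - E) ^ 2 = 1 - E := Real.sq_sqrt (by linarith)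
  have hβ2 : Real.sqrt (1 + E) ^ 2 = 1 + E := Real.sq_sqrt (by linarith)
  have hU : U4 * U4 = 1 := by
    ext i j
    fin_cases i <;> fin_cases j <;>
      simp [U4, Matrix.mul_apply, Fin.sum_univ_four, Matrix.one_apply,
        Matrix.vecHead, Matrix.vecTail]
    all_goals try field_simp
    all_goals try linarith [h2]
    all_goals try nlinarith [h2]
  set u : (Matrix (Fin 4) (Fin 4) ℝ)ˣ := ⟨U4, U4, hU, hU⟩ with hu
  have hK : K E = (↑u : Matrix (Fin 4) (Fin 4) ℝ) *
      (!![0,0,1,0; 0,0,0,1; Real.sqrt (1-E)^2,0,0,0; 0,-Real.sqrt (1+E)^2,0,0] :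
        Matrix (Fin 4) (Fin 4) ℝ) * (↑u⁻¹ : Matrix (Fin 4) (Fin 4) ℝ) := by
    show _ = U4 * _ * U4
    rw [hα2, hβ2]
    ext i j
    fin_cases i <;> fin_cases j <;>
      simp [U4, K, Matrix.mul_apply, Fin.sum_univ_four, Matrix.vecHead, Matrix.vecTail]
    all_goals try field_simp
    all_goals try linarith [h2]
    all_goals try nlinarith [h2]
  rw [hK, Matrix.exp_units_conj u, exp_mid _ _ hα hβ]
  rfl
end
end

section
/- For all nonzero reals α, β and every integer l, the matrix R_{α,β}^l · N · R_{α,β}^{−l}, where N is the 4×4 matrix with 2×2 blocks ((0,0),(I₂,0)), equals the 4×4 matrix A₁(l) whose nonzero entries are (1,1) = sin(lα)cos(lα)/α, (1,3) = −sin²(lα)/α², (3,1) = cos²(lα), (3,3) = −sin(lα)cos(lα)/α, (2,2) = sin(lβ)cos(lβ)/β, (2,4) = −sin²(lβ)/β², (4,2) = cos²(lβ), (4,4) = −sin(lβ)cos(lβ)/β. -/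
open Matrix Real

noncomputable section

/-- The matrix `R_{α,β}`. -/
def Rm (α β : ℝ) : Matrix (Fin 4) (Fin 4) ℝ :=
  !![Real.cos α, 0, Real.sin α / α, 0;
     0, Real.cos β, 0, Real.sin β / β;
     -(α * Real.sin α), 0, Real.cos α, 0;
     0, -(β * Real.sin β), 0, Real.cos β]

/-- `N`: the 4×4 matrix with blocks ((0,0),(I₂,0)). -/
def N : Matrix (Fin 4) (Fin 4) ℝ :=
  !![0,0,0,0; 0,0,0,0; 1,0,0,0; 0,1,0,0]

/-- Generalized `R` at "time" `t`. -/
def Rf (α β t : ℝ) : Matrix (Fin 4) (Fin 4) ℝ :=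
  !![Real.cos (t*α), 0, Real.sin (t*α) / α, 0;
     0, Real.cos (t*β), 0, Real.sin (t*β) / β;
     -(α * Real.sin (t*α)), 0, Real.cos (t*α), 0;
     0, -(β * Real.sin (t*β)), 0, Real.cos (t*β)]

lemma Rf_mul (α β : ℝ) (hα : α ≠ 0) (hβ : β ≠ 0) (s t : ℝ) :
    Rf α β s * Rf α β t = Rf α β (s + t) := by
  ext i j
  fin_cases i <;> fin_cases j <;>
    simp [Rf, Matrix.mul_apply, Fin.sum_univ_four, add_mul, Real.cos_add, Real.sin_add]
  all_goals (try field_simp) <;> ring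

lemma Rf_zero (α β : ℝ) : Rf α β 0 = 1 := by
  ext i j
  fin_cases i <;> fin_cases j <;>
    simp [Rf, Matrix.one_apply, Matrix.vecHead, Matrix.vecTail]

lemma Rm_eq (α β : ℝ) : Rm α β = Rf α β 1 := by
  simp [Rm, Rf]

lemma Rm_pow (α β : ℝ) (hα : α ≠ 0) (hβ : β ≠ 0) (n : ℕ) :
    Rm α β ^ n = Rf α β n := by
  induction n with
  | zero => simp [Rf_zero]
  | succ n ih =>
    rw [pow_succ, ih, Rm_eq, Rf_mul α β hα hβ]
    push_cast
    ring_nf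

lemma Rm_zpow (α β : ℝ) (hα : α ≠ 0) (hβ : β ≠ 0) (l : ℤ) :
    Rm α β ^ l = Rf α β l := by
  obtain ⟨n, rfl | rfl⟩ := l.eq_nat_or_neg
  · rw [zpow_natCast, Rm_pow α β hα hβ]; push_cast; rfl
  · rw [Matrix.zpow_neg_natCast, Rm_pow α β hα hβ]
    refine Matrix.inv_eq_right_inv ?_
    rw [Rf_mul α β hα hβ]
    push_cast
    simp [Rf_zero]

theorem conjugation_A1 (α β : ℝ) (hα : α ≠ 0) (hβ : β ≠ 0) (l : ℤ) :
    Rm α β ^ l * N * Rm α β ^ (-l) =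
      !![Real.sin (l * α) * Real.cos (l * α) / α, 0, -(Real.sin (l * α)) ^ 2 / α ^ 2, 0;
         0, Real.sin (l * β) * Real.cos (l * β) / β, 0, -(Real.sin (l * β)) ^ 2 / β ^ 2;
         (Real.cos (l * α)) ^ 2, 0, -(Real.sin (l * α) * Real.cos (l * α)) / α, 0;
         0, (Real.cos (l * β)) ^ 2, 0, -(Real.sin (l * β) * Real.cos (l * β)) / β] := by
  rw [Rm_zpow α β hα hβ, Rm_zpow α β hα hβ]
  push_cast
  ext i j
  fin_cases i <;> fin_cases j <;>
    simp [Rf, N, Matrix.mul_apply, Fin.sum_univ_four, neg_mul, Real.sin_neg, Real.cos_neg]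
  all_goals first
    | tauto
    | ring
    | ((try field_simp) <;> ring)
end
end

section
/- For all nonzero reals α, β and every integer l, the matrix R_{α,β}^l · N' · R_{α,β}^{−l}, where N' is the 4×4 matrix with 2×2 blocks ((0,0),(σ,0)) and σ = ((0,1),(1,0)), equals the 4×4 matrix A₂(l) whose nonzero entries are (1,2) = sin(lα)cos(lβ)/α, (1,4) = −sin(lα)sin(lβ)/(αβ), (2,1) = sin(lβ)cos(lα)/β, (2,3) = −sin(lα)sin(lβ)/(αβ), (3,2) = cos(lα)cos(lβ), (3,4) = −cos(lα)sin(lβ)/β, (4,1) = cos(lα)cos(lβ), (4,3) = −sin(lα)cos(lβ)/α. -/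
open Matrix Real

noncomputable section

/-- `N'`: the 4×4 matrix with blocks ((0,0),(σ,0)), σ = ((0,1),(1,0)). -/
def N' : Matrix (Fin 4) (Fin 4) ℝ :=
  !![0,0,0,0; 0,0,0,0; 0,1,0,0; 1,0,0,0]

def Rg (α β x y : ℝ) : Matrix (Fin 4) (Fin 4) ℝ :=
  !![Real.cos x, 0, Real.sin x / α, 0;
     0, Real.cos y, 0, Real.sin y / β;
     -(α * Real.sin x), 0, Real.cos x, 0;
     0, -(β * Real.sin y), 0, Real.cos y]

lemma Rg_mul (α β : ℝ) (hα : α ≠ 0) (hβ : β ≠ 0) (x y x' y' : ℝ) :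
    Rg α β x y * Rg α β x' y' = Rg α β (x + x') (y + y') := by
  ext i j
  fin_cases i <;> fin_cases j
  all_goals simp [Rg, Matrix.mul_apply, Fin.sum_univ_four, Real.cos_add, Real.sin_add,
    Matrix.vecHead, Matrix.vecTail]
  all_goals (try field_simp)
  all_goals ring

lemma Rg_zero (α β : ℝ) : Rg α β 0 0 = 1 := by
  ext i j
  fin_cases i <;> fin_cases j <;> simp [Rg, Matrix.one_apply, Matrix.vecHead, Matrix.vecTail]

lemma Rg_inv (α β : ℝ) (hα : α ≠ 0) (hβ : β ≠ 0) (x y : ℝ) :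
    (Rg α β x y)⁻¹ = Rg α β (-x) (-y) := by
  apply Matrix.inv_eq_right_inv
  rw [Rg_mul α β hα hβ, add_neg_cancel, add_neg_cancel, Rg_zero]

lemma Rg_pow (α β : ℝ) (hα : α ≠ 0) (hβ : β ≠ 0) (n : ℕ) :
    Rm α β ^ n = Rg α β (n * α) (n * β) := by
  induction n with
  | zero => simpa using (Rg_zero α β).symm
  | succ n ih =>
      have : Rm α β = Rg α β α β := rfl
      rw [pow_succ, ih, this, Rg_mul α β hα hβ]
      push_cast
      ring_nf

lemma Rg_zpow (α β : ℝ) (hα : α ≠ 0) (hβ : β ≠ 0) (l : ℤ) :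
    Rm α β ^ l = Rg α β (l * α) (l * β) := by
  cases l with
  | ofNat n => rw [Int.ofNat_eq_natCast, zpow_natCast, Rg_pow α β hα hβ]; push_cast; ring_nf
  | negSucc n =>
      rw [zpow_negSucc, Rg_pow α β hα hβ, Rg_inv α β hα hβ]
      push_cast
      ring_nf

set_option maxHeartbeats 1000000 in
theorem conjugation_A2 (α β : ℝ) (hα : α ≠ 0) (hβ : β ≠ 0) (l : ℤ) :
    Rm α β ^ l * N' * Rm α β ^ (-l) =
      !![0, Real.sin (l * α) * Real.cos (l * β) / α, 0,
           -(Real.sin (l * α) * Real.sin (l * β)) / (α * β);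
         Real.sin (l * β) * Real.cos (l * α) / β, 0,
           -(Real.sin (l * α) * Real.sin (l * β)) / (α * β), 0;
         0, Real.cos (l * α) * Real.cos (l * β), 0,
           -(Real.cos (l * α) * Real.sin (l * β)) / β;
         Real.cos (l * α) * Real.cos (l * β), 0,
           -(Real.sin (l * α) * Real.cos (l * β)) / α, 0] := by
  rw [Rg_zpow α β hα hβ, Rg_zpow α β hα hβ]
  ext i j
  fin_cases i <;> fin_cases j
  all_goals simp [Rg, N', Matrix.mul_apply, Fin.sum_univ_four, Matrix.vecHead, Matrix.vecTail]
  all_goals (try push_cast)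
  all_goals (try field_simp)
  all_goals (try ring)
  all_goals tauto
end
end

section
/- For all nonzero reals α and β, the determinant of the 4×4 matrix whose columns are v₀ = (1, 0, 0, 0)ᵀ and, for l = 1, 2, 3, v_l = (cos(lα)cos(lβ), −sin(lα)sin(lβ)/(αβ), sin(lα)cos(lβ)/α, sin(lβ)cos(lα)/β)ᵀ equals (4/(α²β²)) · sin²(α) · sin²(β) · (cos²(α) − cos²(β)). (Determinant identity (20) from Step 5 of the proof of Theorem 3.1.) -/
open Matrix Real

theorem det_identity_A2 (α β : ℝ) (hα : α ≠ 0) (hβ : β ≠ 0) :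
    Matrix.det
      !![1, Real.cos α * Real.cos β, Real.cos (2*α) * Real.cos (2*β),
           Real.cos (3*α) * Real.cos (3*β);
         0, -(Real.sin α * Real.sin β) / (α * β), -(Real.sin (2*α) * Real.sin (2*β)) / (α * β),
           -(Real.sin (3*α) * Real.sin (3*β)) / (α * β);
         0, Real.sin α * Real.cos β / α, Real.sin (2*α) * Real.cos (2*β) / α,
           Real.sin (3*α) * Real.cos (3*β) / α;
         0, Real.sin β * Real.cos α / β, Real.sin (2*β) * Real.cos (2*α) / β,
           Real.sin (3*β) * Real.cos (3*α) / β] =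
      4 / (α ^ 2 * β ^ 2) * (Real.sin α) ^ 2 * (Real.sin β) ^ 2 *
        ((Real.cos α) ^ 2 - (Real.cos β) ^ 2) := by
  have h3 : (3:ℝ) * α = 2*α + α := by ring
  have h3' : (3:ℝ) * β = 2*β + β := by ring
  have sa := Real.sin_sq_add_cos_sq α
  have sb := Real.sin_sq_add_cos_sq β
  simp [Matrix.det_succ_row_zero, Fin.sum_univ_succ]
  simp only [h3, h3', Real.sin_add, Real.cos_add, Real.sin_two_mul, Real.cos_two_mul]
  field_simp
  linear_combination (((-16)*Real.sin α^2*Real.cos α^2*Real.sin β^2*Real.cos β^2 + (4)*Real.sin α^2*Real.cos α^2*Real.sin β^2 + (16)*Real.cos α^2*Real.sin β^4*Real.cos β^2 + (16)*Real.cos α^2*Real.sin β^2*Real.cos β^4 + (-16)*Real.cos α^2*Real.sin β^2*Real.cos β^2 + (-4)*Real.sin β^4*Real.cos β^2 + (-4)*Real.sin β^2*Real.cos β^4 + (4)*Real.sin β^2*Real.cos β^2)) * sa + (((-16)*Real.cos α^4*Real.sin β^2*Real.cos β^2 + (20)*Real.cos α^2*Real.sin β^2*Real.cos β^2 + (-4)*Real.sin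 β^2*Real.cos β^2)) * sb
end

section
/- For all nonzero reals α and β, the determinant of the 4×4 matrix whose columns are v₀ = (1, 0, 0, 0)ᵀ and, for l = 1, 2, 3, v_l = (cosh(lα)cos(lβ), −sinh(lα)sin(lβ)/(αβ), sinh(lα)cos(lβ)/α, sin(lβ)cosh(lα)/β)ᵀ equals (4/(α²β²)) · sinh²(α) · sin²(β) · (cosh²(α) − cos²(β)). (Determinant identity (22) from the case E ∈ (−1,1) of Theorem 3.1.) -/
set_option maxHeartbeats 1000000


open Matrix Real

theorem det_identity_A2_hyperbolic (α β : ℝ) (hα : α ≠ 0) (hβ : β ≠ 0) :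
    Matrix.det
      !![1, Real.cosh α * Real.cos β, Real.cosh (2*α) * Real.cos (2*β),
           Real.cosh (3*α) * Real.cos (3*β);
         0, -(Real.sinh α * Real.sin β) / (α * β), -(Real.sinh (2*α) * Real.sin (2*β)) / (α * β),
           -(Real.sinh (3*α) * Real.sin (3*β)) / (α * β);
         0, Real.sinh α * Real.cos β / α, Real.sinh (2*α) * Real.cos (2*β) / α,
           Real.sinh (3*α) * Real.cos (3*β) / α;
         0, Real.sin β * Real.cosh α / β, Real.sin (2*β) * Real.cosh (2*α) / β,
           Real.sin (3*β) * Real.cosh (3*α) / β] =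
      4 / (α ^ 2 * β ^ 2) * (Real.sinh α) ^ 2 * (Real.sin β) ^ 2 *
        ((Real.cosh α) ^ 2 - (Real.cos β) ^ 2) := by
  have e2a : (2:ℝ)*α = α + α := by ring
  have e3a : (3:ℝ)*α = α + (α + α) := by ring
  have e2b : (2:ℝ)*β = β + β := by ring
  have e3b : (3:ℝ)*β = β + (β + β) := by ring
  simp [Matrix.det_succ_row_zero, Fin.sum_univ_succ, Fin.succAbove]
  rw [e2a, e3a, e2b, e3b]
  simp only [Real.sinh_add, Real.cosh_add, Real.sin_add, Real.cos_add]
  set s := Real.sinh α with hs'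
  set c := Real.cosh α with hc'
  set S := Real.sin β with hS'
  set C := Real.cos β with hC'
  have hc : c ^ 2 = 1 + s ^ 2 := by
    nlinarith [Real.cosh_sq_sub_sinh_sq α]
  have hs : S ^ 2 = 1 - C ^ 2 := Real.sin_sq β
  field_simp
  linear_combination (1:ℝ) *
    ((-4*s^2*S^2 + 4*s^2*S^4*C^2 + 4*s^2*S^6 + 4*s^2*c^2*S^4*C^2 + 4*s^2*c^2*S^6
        + 4*s^4*S^2*C^4 + 4*s^4*S^4*C^2) * hc
      + (4*s^2*S^2 + 4*s^2*S^4 + 4*s^4*S^2 + 4*s^4*S^2*C^2 + 4*s^4*S^4) * hs)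
end

section
/- The set of E ∈ (1, ∞) such that sin(√(E−1)) · sin(√(E+1)) · cos(√(E−1)) · cos(√(E+1)) · (cos²(√(E−1)) − cos²(√(E+1))) = 0 is a closed, discrete subset of ℝ, i.e. it has no accumulation point in ℝ (in particular its points do not accumulate at 1). -/
open Real Filter Complex Topology

lemma analyticAt_rsin (x : ℝ) : AnalyticAt ℝ Real.sin x := by
  have h : AnalyticAt ℝ (fun y : ℝ => (Complex.sin (y : ℂ)).re) x := by
    exact (Complex.reCLM.analyticAt _).comp <|
      ((Complex.differentiable_sin.analyticAt _).restrictScalars).comp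
      (Complex.ofRealCLM.analyticAt _)
  exact h.congr (Filter.Eventually.of_forall fun y => Complex.sin_ofReal_re y)

lemma analyticAt_rcos (x : ℝ) : AnalyticAt ℝ Real.cos x := by
  have h : AnalyticAt ℝ (fun y : ℝ => (Complex.cos (y : ℂ)).re) x := by
    exact (Complex.reCLM.analyticAt _).comp <|
      ((Complex.differentiable_cos.analyticAt _).restrictScalars).comp
      (Complex.ofRealCLM.analyticAt _)
  exact h.congr (Filter.Eventually.of_forall fun y => Complex.cos_ofReal_re y)

lemma analyticAt_rlog {x : ℝ} (hx : 0 < x) : AnalyticAt ℝ Real.log x := by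
  have h : AnalyticAt ℝ (fun y : ℝ => (Complex.log (y : ℂ)).re) x := by
    exact (Complex.reCLM.analyticAt _).comp <|
      ((analyticAt_clog (Complex.ofReal_mem_slitPlane.2 hx)).restrictScalars).comp
      (Complex.ofRealCLM.analyticAt _)
  exact h.congr (Filter.Eventually.of_forall fun y => Complex.log_ofReal_re y)

lemma analyticAt_rsqrt {x : ℝ} (hx : 0 < x) : AnalyticAt ℝ Real.sqrt x := by
  have h : AnalyticAt ℝ (fun y : ℝ => Real.exp (Real.log y / 2)) x :=
    analyticAt_rexp.comp ((analyticAt_rlog hx).div (analyticAt_const) (by norm_num))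
  apply h.congr
  filter_upwards [eventually_gt_nhds hx] with y hy
  have : Real.exp (Real.log y / 2) ^ 2 = y := by
    rw [sq, ← Real.exp_add]
    rw [show Real.log y / 2 + Real.log y / 2 = Real.log y by ring, Real.exp_log hy]
  conv_rhs => rw [← this]
  rw [Real.sqrt_sq (Real.exp_pos _).le]

noncomputable def fE (E : ℝ) : ℝ :=
  Real.sin (Real.sqrt (E - 1)) * Real.sin (Real.sqrt (E + 1)) *
    Real.cos (Real.sqrt (E - 1)) * Real.cos (Real.sqrt (E + 1)) *
    ((Real.cos (Real.sqrt (E - 1))) ^ 2 - (Real.cos (Real.sqrt (E + 1))) ^ 2)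

lemma fE_analyticAt {x : ℝ} (hx : 1 < x) : AnalyticAt ℝ fE x := by
  have h1 : AnalyticAt ℝ (fun E : ℝ => Real.sqrt (E - 1)) x :=
    (analyticAt_rsqrt (by linarith)).comp ((analyticAt_id).sub analyticAt_const)
  have h2 : AnalyticAt ℝ (fun E : ℝ => Real.sqrt (E + 1)) x :=
    (analyticAt_rsqrt (by linarith)).comp ((analyticAt_id).add analyticAt_const)
  have s1 := (analyticAt_rsin _).comp h1
  have s2 := (analyticAt_rsin _).comp h2
  have c1 := (analyticAt_rcos _).comp h1
  have c2 := (analyticAt_rcos _).comp h2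
  exact (((s1.mul s2).mul c1).mul c2).mul ((c1.pow 2).sub (c2.pow 2))

lemma fE_pos {E : ℝ} (h1 : 1 < E) (h2 : E < 1.2) : 0 < fE E := by
  have hpi : (3 : ℝ) < Real.pi := Real.pi_gt_three
  set a := Real.sqrt (E - 1) with ha
  set b := Real.sqrt (E + 1) with hb
  have ha0 : 0 < a := Real.sqrt_pos.2 (by linarith)
  have hb0 : 0 < b := Real.sqrt_pos.2 (by linarith)
  have hab : a < b := Real.sqrt_lt_sqrt (by linarith) (by linarith)
  have hbpi2 : b < Real.pi / 2 := by
    rw [hb, show Real.pi / 2 = Real.sqrt ((Real.pi / 2) ^ 2) from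
      (Real.sqrt_sq (by linarith)).symm]
    apply Real.sqrt_lt_sqrt (by linarith)
    nlinarith
  have hapi2 : a < Real.pi / 2 := lt_trans hab hbpi2
  have hsa : 0 < Real.sin a := Real.sin_pos_of_pos_of_lt_pi ha0 (by linarith)
  have hsb : 0 < Real.sin b := Real.sin_pos_of_pos_of_lt_pi hb0 (by linarith)
  have hca : 0 < Real.cos a := Real.cos_pos_of_mem_Ioo ⟨by linarith, hapi2⟩
  have hcb : 0 < Real.cos b := Real.cos_pos_of_mem_Ioo ⟨by linarith, hbpi2⟩
  have hcc : Real.cos b < Real.cos a :=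
    Real.cos_lt_cos_of_nonneg_of_le_pi ha0.le (by linarith) hab
  have hsq : Real.cos b ^ 2 < Real.cos a ^ 2 := by nlinarith
  unfold fE
  rw [← ha, ← hb]
  have : 0 < Real.cos a ^ 2 - Real.cos b ^ 2 := by linarith
  positivity

theorem exceptional_set_discrete :
    IsClosed {E : ℝ | 1 < E ∧
        Real.sin (Real.sqrt (E - 1)) * Real.sin (Real.sqrt (E + 1)) *
          Real.cos (Real.sqrt (E - 1)) * Real.cos (Real.sqrt (E + 1)) *
          ((Real.cos (Real.sqrt (E - 1))) ^ 2 - (Real.cos (Real.sqrt (E + 1))) ^ 2) = 0} ∧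
      ∀ x : ℝ, ¬ AccPt x (Filter.principal {E : ℝ | 1 < E ∧
        Real.sin (Real.sqrt (E - 1)) * Real.sin (Real.sqrt (E + 1)) *
          Real.cos (Real.sqrt (E - 1)) * Real.cos (Real.sqrt (E + 1)) *
          ((Real.cos (Real.sqrt (E - 1))) ^ 2 - (Real.cos (Real.sqrt (E + 1))) ^ 2) = 0}) := by
  set S : Set ℝ := {E : ℝ | 1 < E ∧ fE E = 0} with hS
  have hSeq : {E : ℝ | 1 < E ∧
      Real.sin (Real.sqrt (E - 1)) * Real.sin (Real.sqrt (E + 1)) *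
        Real.cos (Real.sqrt (E - 1)) * Real.cos (Real.sqrt (E + 1)) *
        ((Real.cos (Real.sqrt (E - 1))) ^ 2 - (Real.cos (Real.sqrt (E + 1))) ^ 2) = 0} = S := rfl
  rw [hSeq]
  -- no accumulation points
  have noacc : ∀ x : ℝ, ¬ AccPt x (𝓟 S) := by
    intro x hacc
    rw [accPt_iff_frequently] at hacc
    rcases lt_trichotomy x 1 with hx | hx | hx
    · have : ∀ᶠ y in 𝓝 x, ¬(y ≠ x ∧ y ∈ S) := by
        filter_upwards [eventually_lt_nhds hx] with y hy
        rintro ⟨-, hy1, -⟩; linarith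
      exact this.and_frequently hacc |>.exists.elim (fun y hy => hy.1 hy.2)
    · subst hx
      have : ∀ᶠ y in 𝓝 (1:ℝ), ¬(y ≠ 1 ∧ y ∈ S) := by
        have hball : Metric.ball (1:ℝ) 0.2 ∈ 𝓝 (1:ℝ) := Metric.ball_mem_nhds _ (by norm_num)
        filter_upwards [hball] with y hy
        rintro ⟨-, hy1, hy2⟩
        rw [Real.ball_eq_Ioo] at hy
        rw [Set.mem_Ioo] at hy
        have : (0:ℝ) < fE y := fE_pos hy1 (by linarith [hy.2])
        exact absurd hy2 (ne_of_gt this)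
      exact this.and_frequently hacc |>.exists.elim (fun y hy => hy.1 hy.2)
    · rcases (fE_analyticAt hx).eventually_eq_zero_or_eventually_ne_zero with hz | hnz
      · -- f vanishes near x: identity theorem contradiction
        have hU : IsPreconnected (Set.Ioi (1:ℝ)) := isPreconnected_Ioi
        have hA : AnalyticOnNhd ℝ fE (Set.Ioi 1) := fun y hy => fE_analyticAt hy
        have hfreq : ∃ᶠ y in 𝓝[≠] x, fE y = 0 :=
          (hz.filter_mono nhdsWithin_le_nhds).frequently
        have hzero := hA.eqOn_zero_of_preconnected_of_frequently_eq_zero hU hx hfreq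
        have h11 : fE 1.1 = 0 := hzero (by norm_num : (1.1:ℝ) ∈ Set.Ioi 1)
        have := fE_pos (by norm_num : (1:ℝ) < 1.1) (by norm_num)
        linarith
      · have : ∀ᶠ y in 𝓝 x, ¬(y ≠ x ∧ y ∈ S) := by
          rw [eventually_nhdsWithin_iff] at hnz
          filter_upwards [hnz] with y hy
          rintro ⟨hyx, -, hy2⟩
          exact hy hyx hy2
        exact this.and_frequently hacc |>.exists.elim (fun y hy => hy.1 hy.2)
  refine ⟨?_, noacc⟩
  -- closedness from no accumulation points
  rw [isClosed_iff_clusterPt]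
  intro a ha
  by_contra h
  apply noacc a
  rw [accPt_principal_iff_clusterPt, Set.diff_singleton_eq_self h]
  exact ha
end

section
/- For any two distinct real numbers λ₁ and λ₂, the set of E > max(λ₁, λ₂) such that the three real numbers 2π, √(E − λ₁), √(E − λ₂) are linearly dependent over ℚ is countable. (This covers the countability of the exceptional sets C₁, C₂, C₃ in the proof of Proposition 4.2.) -/
open Real

/-- The zero set of a nontrivial real quadratic is finite. -/
lemma quad_zero_finite (A B C : ℝ) (hABC : ¬(A = 0 ∧ B = 0 ∧ C = 0)) :
    {E : ℝ | A * E ^ 2 + B * E + C = 0}.Finite := by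
  set p : Polynomial ℝ :=
    Polynomial.C A * Polynomial.X ^ 2 + Polynomial.C B * Polynomial.X + Polynomial.C C with hp
  have hpne : p ≠ 0 := by
    intro h0
    apply hABC
    refine ⟨?_, ?_, ?_⟩
    · have := congrArg (fun q => Polynomial.coeff q 2) h0
      simpa [hp] using this
    · have := congrArg (fun q => Polynomial.coeff q 1) h0
      simpa [hp] using this
    · have := congrArg (fun q => Polynomial.coeff q 0) h0
      simpa [hp] using this
  refine (Polynomial.finite_setOf_isRoot hpne).subset ?_
  intro E hE
  simp only [Set.mem_setOf_eq] at hE ⊢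
  simp [Polynomial.IsRoot, hp, hE]

lemma coeffs_ne_zero (l1 l2 : ℝ) (h : l1 ≠ l2) (q0 q1 q2 : ℝ)
    (hq : ¬(q0 = 0 ∧ q1 = 0 ∧ q2 = 0)) :
    ¬((q1 ^ 2 - q2 ^ 2) ^ 2 = 0 ∧
      -2 * (q1 ^ 2 + q2 ^ 2) * (4 * Real.pi ^ 2 * q0 ^ 2 + q1 ^ 2 * l1 + q2 ^ 2 * l2)
        + 4 * q1 ^ 2 * q2 ^ 2 * (l1 + l2) = 0 ∧
      (4 * Real.pi ^ 2 * q0 ^ 2 + q1 ^ 2 * l1 + q2 ^ 2 * l2) ^ 2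
        - 4 * q1 ^ 2 * q2 ^ 2 * (l1 * l2) = 0) := by
  rintro ⟨hA0, hB0, hC0⟩
  have hpi := Real.pi_pos
  have h12 : q2 ^ 2 = q1 ^ 2 := by
    have := sq_eq_zero_iff.mp hA0
    linarith
  by_cases h1 : q1 = 0
  · have h2 : q2 = 0 := by
      have : q2 ^ 2 = 0 := by rw [h12, h1]; ring
      exact sq_eq_zero_iff.mp this
    have h0 : q0 ≠ 0 := fun h0' => hq ⟨h0', h1, h2⟩
    rw [h1, h2] at hC0
    have hpos : (0 : ℝ) < (4 * Real.pi ^ 2 * q0 ^ 2 + 0 ^ 2 * l1 + 0 ^ 2 * l2) ^ 2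
        - 4 * 0 ^ 2 * 0 ^ 2 * (l1 * l2) := by
      have : (0 : ℝ) < (4 * Real.pi ^ 2 * q0 ^ 2) ^ 2 := by positivity
      nlinarith [this]
    linarith
  · by_cases h0 : q0 = 0
    · rw [h0, h12] at hC0
      have hkey : (q1 ^ 2 * (l1 - l2)) ^ 2 = 0 := by linear_combination hC0
      have : q1 ^ 2 * (l1 - l2) = 0 := sq_eq_zero_iff.mp hkey
      exact (mul_ne_zero (pow_ne_zero 2 h1) (sub_ne_zero.2 h)) this
    · rw [h12] at hB0
      have hkey : 16 * Real.pi ^ 2 * q0 ^ 2 * q1 ^ 2 = 0 := by linear_combination -hB0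
      have : (0 : ℝ) < 16 * Real.pi ^ 2 * q0 ^ 2 * q1 ^ 2 := by positivity
      linarith

theorem rationally_dependent_energies_countable (l1 l2 : ℝ) (h : l1 ≠ l2) :
    Set.Countable {E : ℝ | max l1 l2 < E ∧
      ∃ q0 q1 q2 : ℚ, ¬(q0 = 0 ∧ q1 = 0 ∧ q2 = 0) ∧
        (q0 : ℝ) * (2 * Real.pi) + (q1 : ℝ) * Real.sqrt (E - l1) +
          (q2 : ℝ) * Real.sqrt (E - l2) = 0} := by
  have hsub : {E : ℝ | max l1 l2 < E ∧
      ∃ q0 q1 q2 : ℚ, ¬(q0 = 0 ∧ q1 = 0 ∧ q2 = 0) ∧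
        (q0 : ℝ) * (2 * Real.pi) + (q1 : ℝ) * Real.sqrt (E - l1) +
          (q2 : ℝ) * Real.sqrt (E - l2) = 0} ⊆
      ⋃ q : ℚ × ℚ × ℚ, {E : ℝ | max l1 l2 < E ∧
        ¬(q.1 = 0 ∧ q.2.1 = 0 ∧ q.2.2 = 0) ∧
        (q.1 : ℝ) * (2 * Real.pi) + (q.2.1 : ℝ) * Real.sqrt (E - l1) +
          (q.2.2 : ℝ) * Real.sqrt (E - l2) = 0} := by
    rintro E ⟨hE, q0, q1, q2, hq, heq⟩
    exact Set.mem_iUnion.2 ⟨(q0, q1, q2), hE, hq, heq⟩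
  refine Set.Countable.mono hsub ?_
  refine Set.countable_iUnion ?_
  rintro ⟨q0, q1, q2⟩
  by_cases hq : q0 = 0 ∧ q1 = 0 ∧ q2 = 0
  · refine Set.Countable.mono ?_ Set.countable_empty
    rintro E ⟨-, hq', -⟩
    exact absurd hq hq'
  have hq' : ¬((q0 : ℝ) = 0 ∧ (q1 : ℝ) = 0 ∧ (q2 : ℝ) = 0) := by
    rintro ⟨a, b, c⟩
    exact hq ⟨by exact_mod_cast a, by exact_mod_cast b, by exact_mod_cast c⟩
  have hABC := coeffs_ne_zero l1 l2 h (q0 : ℝ) (q1 : ℝ) (q2 : ℝ) hq'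
  refine Set.Finite.countable ?_
  refine (quad_zero_finite _ _ _ hABC).subset ?_
  rintro E ⟨hE, -, heq⟩
  simp only [Set.mem_setOf_eq]
  have hl1 : 0 ≤ E - l1 := by
    have := le_max_left l1 l2; linarith
  have hl2 : 0 ≤ E - l2 := by
    have := le_max_right l1 l2; linarith
  set u : ℝ := Real.sqrt (E - l1) with hu'
  set v : ℝ := Real.sqrt (E - l2) with hv'
  have hu : u ^ 2 = E - l1 := Real.sq_sqrt hl1
  have hv : v ^ 2 = E - l2 := Real.sq_sqrt hl2
  have hsq : ((q1 : ℝ) * u + (q2 : ℝ) * v) ^ 2 = 4 * Real.pi ^ 2 * (q0 : ℝ) ^ 2 := by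
    linear_combination ((q1 : ℝ) * u + (q2 : ℝ) * v - 2 * Real.pi * (q0 : ℝ)) * heq
  have huv : 2 * (q1 : ℝ) * (q2 : ℝ) * (u * v)
      = 4 * Real.pi ^ 2 * (q0 : ℝ) ^ 2 - (q1 : ℝ) ^ 2 * (E - l1) - (q2 : ℝ) ^ 2 * (E - l2) := by
    linear_combination hsq - (q1 : ℝ) ^ 2 * hu - (q2 : ℝ) ^ 2 * hv
  have hfin : 4 * (q1 : ℝ) ^ 2 * (q2 : ℝ) ^ 2 * ((E - l1) * (E - l2))
      = (4 * Real.pi ^ 2 * (q0 : ℝ) ^ 2 - (q1 : ℝ) ^ 2 * (E - l1)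
          - (q2 : ℝ) ^ 2 * (E - l2)) ^ 2 := by
    linear_combination
      (2 * (q1 : ℝ) * (q2 : ℝ) * (u * v)
        + (4 * Real.pi ^ 2 * (q0 : ℝ) ^ 2 - (q1 : ℝ) ^ 2 * (E - l1)
            - (q2 : ℝ) ^ 2 * (E - l2))) * huv
      - 4 * (q1 : ℝ) ^ 2 * (q2 : ℝ) ^ 2 * v ^ 2 * hu
      - 4 * (q1 : ℝ) ^ 2 * (q2 : ℝ) ^ 2 * (E - l1) * hv
  linear_combination -hfin
end
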